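/- arXiv:1703.07251 — 8 statements merged into one kernel-verified Lean document; each statement's English description precedes it below -/
import Mathlib

section
/- Let e_1,…,e_k ∈ {+1,−1}^n for some k ≥ 1 and let σ^1,…,σ^k ∈ {+1,−1}. Suppose there exist a vector R ∈ ℝ^n and λ = (λ^1,…,λ^k) with all λ^ℓ ≥ 0, ‖R‖ ≤ 1 and λ^1 + ⋯ + λ^k = 1, such that R − L ∈ Q*, where L = ∑_ℓ λ^ℓ σ^ℓ e_ℓ. Then for every a ∈ Q, if σ^ℓ (e_ℓ a) ≥ 0 for all ℓ = 1,…,k, then there exists ℓ with |e_ℓ a| ≤ ‖a‖. -/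
/-!
If every `|e_ℓ a|` exceeded `‖a‖`, the sign conditions would make `σ^ℓ (e_ℓ a) = |e_ℓ a| > ‖a‖`
for all `ℓ`, hence also for the convex combination `L a`. But `R - L ∈ Q*` and Cauchy–Schwarz give
`L a ≤ R a ≤ ‖R‖ ‖a‖ ≤ ‖a‖`.
-/

open Finset

/-- The cone `Q = {a : a₁ ≥ a₂ ≥ ⋯ ≥ aₙ ≥ 0}`. -/
def inQ {n : ℕ} (a : Fin n → ℝ) : Prop :=
  (∀ i j : Fin n, i ≤ j → a j ≤ a i) ∧ ∀ i, 0 ≤ a i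

/-- The dual cone `Q*`: vectors `V` with `V·a ≥ 0` for all `a ∈ Q`. -/
def inQdual {n : ℕ} (V : Fin n → ℝ) : Prop :=
  ∀ a : Fin n → ℝ, inQ a → 0 ≤ ∑ i, V i * a i

theorem inQdual.sum_mul_le {n : ℕ} {V W : Fin n → ℝ} (h : inQdual fun i => V i - W i)
    {a : Fin n → ℝ} (ha : inQ a) : ∑ i, W i * a i ≤ ∑ i, V i * a i := by
  have := h a ha
  simp only [sub_mul, sum_sub_distrib] at this
  linarith

theorem Finset.exists_le_of_sum_mul_le {ι : Type*} {s : Finset ι} {w f : ι → ℝ} {c : ℝ}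
    (hw₀ : ∀ i ∈ s, 0 ≤ w i) (hw₁ : ∑ i ∈ s, w i = 1) (h : ∑ i ∈ s, w i * f i ≤ c) :
    ∃ i ∈ s, f i ≤ c := by
  have hinf := inf_le_centerMass (f := f) hw₀ (hw₁ ▸ zero_lt_one)
  obtain ⟨i, hi, heq⟩ := exists_mem_eq_inf' (nonempty_of_sum_ne_zero (hw₁ ▸ one_ne_zero)) f
  rw [centerMass_eq_of_sum_1 _ _ hw₁] at hinf
  exact ⟨i, hi, heq ▸ hinf.trans h⟩

theorem Real.sum_mul_le_sqrt_sum_sq {ι : Type*} {s : Finset ι} {r a : ι → ℝ}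
    (hr : √(∑ i ∈ s, r i ^ 2) ≤ 1) : ∑ i ∈ s, r i * a i ≤ √(∑ i ∈ s, a i ^ 2) :=
  calc ∑ i ∈ s, r i * a i ≤ √(∑ i ∈ s, r i ^ 2) * √(∑ i ∈ s, a i ^ 2) :=
        sum_mul_le_sqrt_mul_sqrt s r a
    _ ≤ √(∑ i ∈ s, a i ^ 2) := mul_le_of_le_one_left (sqrt_nonneg _) hr

theorem abs_eq_mul_of_abs_eq_one {s x : ℝ} (hs : |s| = 1) (h : 0 ≤ s * x) : |x| = s * x := by
  rw [← abs_of_nonneg h, abs_mul, hs, one_mul]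

theorem Finset.sum_sum_mul_mul_eq {ι κ : Type*} (s : Finset ι) (t : Finset κ) (c : κ → ℝ)
    (e : κ → ι → ℝ) (a : ι → ℝ) :
    ∑ i ∈ s, (∑ ℓ ∈ t, c ℓ * e ℓ i) * a i = ∑ ℓ ∈ t, c ℓ * ∑ i ∈ s, e ℓ i * a i := by
  simp only [sum_mul, mul_sum, mul_assoc]
  exact sum_comm

theorem stmt_2_general (n k : ℕ)
    (e : Fin k → Fin n → ℝ)
    (σ : Fin k → ℝ) (hσ : ∀ ℓ, σ ℓ = 1 ∨ σ ℓ = -1)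
    (R : Fin n → ℝ) (lam : Fin k → ℝ)
    (hlam : ∀ ℓ, 0 ≤ lam ℓ)
    (hRnorm : Real.sqrt (∑ i, R i ^ 2) ≤ 1)
    (hlamsum : ∑ ℓ, lam ℓ = 1)
    (hdual : inQdual (fun i => R i - ∑ ℓ, lam ℓ * σ ℓ * e ℓ i))
    (a : Fin n → ℝ) (ha : inQ a)
    (hsign : ∀ ℓ, 0 ≤ σ ℓ * ∑ i, e ℓ i * a i) :
    ∃ ℓ, |∑ i, e ℓ i * a i| ≤ Real.sqrt (∑ i, a i ^ 2) := by
  have hLa : ∑ ℓ, lam ℓ * (σ ℓ * ∑ i, e ℓ i * a i) ≤ √(∑ i, a i ^ 2) :=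
    calc ∑ ℓ, lam ℓ * (σ ℓ * ∑ i, e ℓ i * a i)
        = ∑ i, (∑ ℓ, lam ℓ * σ ℓ * e ℓ i) * a i := by
          rw [sum_sum_mul_mul_eq]; simp only [mul_assoc]
      _ ≤ ∑ i, R i * a i := hdual.sum_mul_le ha
      _ ≤ √(∑ i, a i ^ 2) := Real.sum_mul_le_sqrt_sum_sq hRnorm
  obtain ⟨ℓ, -, hℓ⟩ := exists_le_of_sum_mul_le (fun ℓ _ => hlam ℓ) hlamsum hLa
  exact ⟨ℓ, (abs_eq_mul_of_abs_eq_one ((abs_eq zero_le_one).2 (hσ ℓ)) (hsign ℓ)).trans_le hℓ⟩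

theorem stmt_2 (n k : ℕ) (hk : 1 ≤ k)
    (e : Fin k → Fin n → ℝ) (he : ∀ ℓ i, e ℓ i = 1 ∨ e ℓ i = -1)
    (σ : Fin k → ℝ) (hσ : ∀ ℓ, σ ℓ = 1 ∨ σ ℓ = -1)
    (R : Fin n → ℝ) (lam : Fin k → ℝ)
    (hlam : ∀ ℓ, 0 ≤ lam ℓ)
    (hRnorm : Real.sqrt (∑ i, R i ^ 2) ≤ 1)
    (hlamsum : ∑ ℓ, lam ℓ = 1)
    (hdual : inQdual (fun i => R i - ∑ ℓ, lam ℓ * σ ℓ * e ℓ i))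
    (a : Fin n → ℝ) (ha : inQ a)
    (hsign : ∀ ℓ, 0 ≤ σ ℓ * ∑ i, e ℓ i * a i) :
    ∃ ℓ, |∑ i, e ℓ i * a i| ≤ Real.sqrt (∑ i, a i ^ 2) :=
  stmt_2_general n k e σ hσ R lam hlam hRnorm hlamsum hdual a ha hsign
end

section
/- Let n ≥ 2 and let R = (r_1, r_2, 0, …, 0) ∈ ℝ^n with r_1 ≥ r_2 > 0. Then #{ε ∈ {+1,−1}^n : |εR| < ‖R‖} = 2^{n−1}, i.e. exactly half of all sign vectors. Moreover, there exists δ > 0 (depending on R) such that for every a ∈ ℝ^n with ‖R − a‖ < δ one also has #{ε ∈ {+1,−1}^n : |εa| < ‖a‖} = 2^{n−1}. Consequently, for every k with 2 ≤ k ≤ n there exists a ∈ ℝ^n with a_1 ≥ a_2 ≥ ⋯ ≥ a_k > 0 and a_{k+1} = ⋯ = a_n = 0 such that #{ε ∈ {+1,−1}^n : |εa| < ‖a‖} = 2^{n−1}; in particular c_k ≤ 1/2 for all 2 ≤ k ≤ n. -/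
/-!
For `R = (r₁, r₂, 0, …, 0)` one has `(εR)² - ‖R‖² = ±2 r₁ r₂`, with the sign `+` exactly when
`ε₁ = ε₂`; so `|εR| < ‖R‖` holds for exactly half of the sign vectors, and never with equality.
Since `(εa)² < ‖a‖²` is then a strict inequality between continuous functions of `a` for each
of the finitely many `ε`, the count is locally constant near `R`. Moving `R` slightly along
`(0, 0, t, …, t, 0, …, 0)` with `t > 0` small yields vectors with any support size `k ≥ 2`.
-/

open scoped Classical

/-- The number of sign vectors `ε ∈ {+1,-1}^n` with `|εa| < ‖a‖`. -/
noncomputable def strictCount {n : ℕ} (a : Fin n → ℝ) : ℕ :=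
  ((Finset.univ : Finset (Fin n → Bool)).filter
    (fun σ => |∑ i, (if σ i then (1 : ℝ) else -1) * a i|
      < Real.sqrt (∑ i, a i ^ 2))).card

open Finset Filter Topology

lemma card_filter_apply_ne {ι : Type*} [Fintype ι] [DecidableEq ι] {i j : ι} (hij : i ≠ j) :
    #{σ : ι → Bool | σ i ≠ σ j} = 2 ^ (Fintype.card ι - 1) := by
  set toggle : (ι → Bool) → ι → Bool := fun σ => Function.update σ i (!σ i)
  have htoggle : Function.Involutive toggle := fun σ => by simp [toggle]
  have hswap : ∀ σ, σ i ≠ σ j ↔ ¬toggle σ i ≠ toggle σ j := fun σ => by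
    simp only [toggle, Function.update_self, Function.update_of_ne hij.symm]
    cases σ i <;> cases σ j <;> decide
  have hcompl := Fintype.card_congr
    ((htoggle.toPerm _).subtypeEquiv (p := fun σ => σ i ≠ σ j) (q := fun σ => ¬σ i ≠ σ j) hswap)
  rw [Fintype.card_subtype_compl (fun σ : ι → Bool => σ i ≠ σ j), Fintype.card_fun,
    Fintype.card_bool] at hcompl
  rw [← Fintype.card_subtype]
  obtain ⟨m, hm⟩ : ∃ m, Fintype.card ι = m + 1 :=
    Nat.exists_eq_add_one.2 (Fintype.card_pos_iff.2 ⟨i⟩)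
  rw [hm, pow_succ] at hcompl
  rw [hm, Nat.add_sub_cancel]
  omega

def signedSum {ι : Type*} [Fintype ι] (σ : ι → Bool) (a : ι → ℝ) : ℝ :=
  ∑ i, (if σ i then 1 else -1) * a i

section TwoSupport

variable {ι : Type*} [Fintype ι] {R : ι → ℝ} {i j : ι}

lemma sq_signedSum_sub_sum_sq (hij : i ≠ j) (hR : ∀ k, k ≠ i ∧ k ≠ j → R k = 0)
    (σ : ι → Bool) :
    signedSum σ R ^ 2 - ∑ k, R k ^ 2 = 2 * (if σ i = σ j then 1 else -1) * (R i * R j) := by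
  rw [signedSum, Fintype.sum_eq_add i j hij fun k hk => by simp [hR k hk],
    Fintype.sum_eq_add i j hij fun k hk => by simp [hR k hk]]
  cases σ i <;> cases σ j <;>
    simp only [Bool.false_eq_true, Bool.true_eq_false, ↓reduceIte] <;> ring

lemma sq_signedSum_ne_sum_sq (hij : i ≠ j) (hR : ∀ k, k ≠ i ∧ k ≠ j → R k = 0)
    (hRij : R i * R j ≠ 0) (σ : ι → Bool) :
    signedSum σ R ^ 2 ≠ ∑ k, R k ^ 2 := by
  rw [← sub_ne_zero, sq_signedSum_sub_sum_sq hij hR]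
  split_ifs <;> simpa using hRij

lemma sq_signedSum_lt_sum_sq_iff (hij : i ≠ j) (hR : ∀ k, k ≠ i ∧ k ≠ j → R k = 0)
    (hRij : 0 < R i * R j) (σ : ι → Bool) :
    signedSum σ R ^ 2 < ∑ k, R k ^ 2 ↔ σ i ≠ σ j := by
  rw [← sub_neg, sq_signedSum_sub_sum_sq hij hR]
  split_ifs with h <;> simp [h, hRij, hRij.le]

end TwoSupport

lemma strictCount_eq_card_sq_lt {n : ℕ} (a : Fin n → ℝ) :
    strictCount a = #{σ : Fin n → Bool | signedSum σ a ^ 2 < ∑ i, a i ^ 2} := by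
  simp only [strictCount, signedSum, Real.lt_sqrt (abs_nonneg _), sq_abs]
  congr

lemma strictCount_of_two_support {n : ℕ} {R : Fin n → ℝ} {i j : Fin n} (hij : i ≠ j)
    (hR : ∀ k, k ≠ i ∧ k ≠ j → R k = 0) (hRij : 0 < R i * R j) :
    strictCount R = 2 ^ (n - 1) := by
  have hcard := card_filter_apply_ne hij
  rw [Fintype.card_fin] at hcard
  rw [strictCount_eq_card_sq_lt, ← hcard]
  simp only [sq_signedSum_lt_sum_sq_iff hij hR hRij]

lemma eventually_lt_iff_of_ne {X α : Type*} [TopologicalSpace X] [TopologicalSpace α]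
    [LinearOrder α] [OrderClosedTopology α] {f g : X → α} {x : X} (hf : ContinuousAt f x)
    (hg : ContinuousAt g x) (hfg : f x ≠ g x) : ∀ᶠ y in 𝓝 x, (f y < g y ↔ f x < g x) := by
  rcases hfg.lt_or_gt with hlt | hgt
  · filter_upwards [hf.eventually_lt hg hlt] with y hy using iff_of_true hy hlt
  · filter_upwards [hg.eventually_lt hf hgt] with y hy using iff_of_false hy.not_gt hgt.not_gt

lemma eventually_strictCount_eq {n : ℕ} {R : Fin n → ℝ}
    (hR : ∀ σ, signedSum σ R ^ 2 ≠ ∑ i, R i ^ 2) :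
    ∀ᶠ a in 𝓝 R, strictCount a = strictCount R := by
  have hσ : ∀ σ : Fin n → Bool, ∀ᶠ a in 𝓝 R,
      (signedSum σ a ^ 2 < ∑ i, a i ^ 2 ↔ signedSum σ R ^ 2 < ∑ i, R i ^ 2) := fun σ =>
    eventually_lt_iff_of_ne
      ((continuous_finsetSum _ fun i _ => by fun_prop).pow 2).continuousAt
      (continuous_finsetSum _ fun i _ => by fun_prop).continuousAt (hR σ)
  filter_upwards [eventually_all.2 hσ] with a ha
  simp only [strictCount_eq_card_sq_lt, ha]

lemma exists_pos_of_eventually_nhds {n : ℕ} {p : (Fin n → ℝ) → Prop} {R : Fin n → ℝ}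
    (h : ∀ᶠ a in 𝓝 R, p a) :
    ∃ δ > (0 : ℝ), ∀ a : Fin n → ℝ, Real.sqrt (∑ i, (R i - a i) ^ 2) < δ → p a := by
  obtain ⟨δ, hδ, hp⟩ := Metric.eventually_nhds_iff.1 h
  refine ⟨δ, hδ, fun a ha => hp (lt_of_le_of_lt ?_ ha)⟩
  -- the distance on `Fin n → ℝ` is the sup distance, dominated by the Euclidean one
  refine (dist_pi_le_iff (Real.sqrt_nonneg _)).2 fun i => ?_
  rw [Real.dist_eq, abs_sub_comm]
  exact Real.abs_le_sqrt (single_le_sum (f := fun i => (R i - a i) ^ 2)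
    (fun _ _ => sq_nonneg _) (mem_univ i))

lemma exists_profile_mem_of_eventually {n m k : ℕ} {R : Fin n → ℝ} {p : (Fin n → ℝ) → Prop}
    (hmk : m ≤ k) (hanti : ∀ i j : Fin n, i ≤ j → (j : ℕ) < m → R j ≤ R i)
    (hpos : ∀ i : Fin n, (i : ℕ) < m → 0 < R i) (hzero : ∀ i : Fin n, m ≤ (i : ℕ) → R i = 0)
    (hp : ∀ᶠ a in 𝓝 R, p a) :
    ∃ a : Fin n → ℝ, (∀ i j : Fin n, i ≤ j → (j : ℕ) < k → a j ≤ a i) ∧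
      (∀ i : Fin n, (i : ℕ) < k → 0 < a i) ∧ (∀ i : Fin n, k ≤ (i : ℕ) → a i = 0) ∧ p a := by
  set a : ℝ → Fin n → ℝ := fun t i => if m ≤ (i : ℕ) ∧ (i : ℕ) < k then t else R i
  have ha0 : a 0 = R := funext fun i => by
    by_cases h : m ≤ (i : ℕ) ∧ (i : ℕ) < k <;> simp [a, h, hzero]
  have ha : Continuous a := continuous_pi fun i => by
    simp only [a]
    split_ifs <;> fun_prop
  have hsmall : ∀ᶠ t in 𝓝[>] 0, 0 < t ∧ (∀ i : Fin n, (i : ℕ) < m → t < R i) ∧ p (a t) :=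
    eventually_mem_nhdsWithin.and <| nhdsWithin_le_nhds <|
      (eventually_all.2 fun i => eventually_imp_distrib_left.2 fun hi =>
        eventually_lt_nhds (hpos i hi)).and ((ha.tendsto' 0 R ha0).eventually hp)
  obtain ⟨t, ht, htR, hpt⟩ := hsmall.exists
  refine ⟨a t, fun i j hij hj => ?_, fun i hi => ?_, fun i hi => ?_, hpt⟩
  · have hij' : (i : ℕ) ≤ j := hij
    simp only [a]
    split_ifs with hj' hi'
    · exact le_rfl
    · exact (htR i (by omega)).le
    · omega
    · exact hanti i j hij (by omega)
  · simp only [a]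
    split_ifs with hi'
    · exact ht
    · exact hpos i (by omega)
  · simp only [a, show ¬(m ≤ (i : ℕ) ∧ (i : ℕ) < k) by omega, if_false]
    exact hzero i (by omega)

theorem stmt_10 (n : ℕ) (hn : 2 ≤ n) (R : Fin n → ℝ)
    (h21 : R ⟨1, by omega⟩ ≤ R ⟨0, by omega⟩)
    (h2pos : 0 < R ⟨1, by omega⟩)
    (hrest : ∀ i : Fin n, 2 ≤ (i : ℕ) → R i = 0) :
    strictCount R = 2 ^ (n - 1) ∧
    (∃ δ > (0 : ℝ), ∀ a : Fin n → ℝ,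
        Real.sqrt (∑ i, (R i - a i) ^ 2) < δ → strictCount a = 2 ^ (n - 1)) ∧
    (∀ k : ℕ, 2 ≤ k → k ≤ n →
      ∃ a : Fin n → ℝ,
        (∀ i j : Fin n, i ≤ j → (j : ℕ) < k → a j ≤ a i) ∧
        (∀ i : Fin n, (i : ℕ) < k → 0 < a i) ∧
        (∀ i : Fin n, k ≤ (i : ℕ) → a i = 0) ∧
        strictCount a = 2 ^ (n - 1)) := by
  have hpos : ∀ i : Fin n, (i : ℕ) < 2 → 0 < R i := by
    rintro ⟨_ | _ | i, hi⟩ hi2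
    exacts [h2pos.trans_le h21, h2pos, by simp at hi2]
  have hanti : ∀ i j : Fin n, i ≤ j → (j : ℕ) < 2 → R j ≤ R i := by
    rintro ⟨_ | _ | i, hi⟩ ⟨_ | _ | j, hj⟩ hij hj2 <;> simp_all [Fin.le_def]
  have hne : (⟨0, by omega⟩ : Fin n) ≠ ⟨1, by omega⟩ := by simp
  have hsupp : ∀ i : Fin n, i ≠ ⟨0, by omega⟩ ∧ i ≠ ⟨1, by omega⟩ → R i = 0 := fun i hi =>
    hrest i (by simp only [ne_eq, Fin.ext_iff] at hi; omega)
  have hR01 : 0 < R ⟨0, by omega⟩ * R ⟨1, by omega⟩ := mul_pos (hpos _ (by simp)) h2pos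
  have hcount := strictCount_of_two_support hne hsupp hR01
  have hnear : ∀ᶠ a in 𝓝 R, strictCount a = 2 ^ (n - 1) :=
    hcount ▸ eventually_strictCount_eq (sq_signedSum_ne_sum_sq hne hsupp hR01.ne')
  exact ⟨hcount, exists_pos_of_eventually_nhds hnear, fun k hk _ =>
    exists_profile_mem_of_eventually hk hanti hpos hrest hnear⟩
end

section
/- If ε_1, ε_2 ∈ {+1,−1}^n, then ε_1 ∨ ε_2 ∈ {+1,−1}^n and ε_1 ∧ ε_2 ∈ {+1,−1}^n. -/
/-!
The partial sums of two `±1` vectors differ by an even integer at every index. So before each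
step the two walks are either level, and the maximum moves by `max s t = ±1`, or at least `2`
apart, and the higher walk stays weakly on top, so the maximum moves by its step `±1`. The meet
is the join of the negated vectors, negated.
-/

/-- The vector of cumulative sums of `x`: `cumsum x m = x 0 + ⋯ + x m`. -/
def cumsum {n : ℕ} (x : Fin n → ℝ) (m : Fin n) : ℝ :=
  ∑ i ∈ Finset.univ.filter (fun i => i ≤ m), x i

open Finset

lemma cumsum_eq_sum_Iic {n : ℕ} (x : Fin n → ℝ) (m : Fin n) : cumsum x m = ∑ i ∈ Iic m, x i := by
  rw [cumsum, filter_ge_eq_Iic]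

lemma exists_int_sum_sub_sum_eq_two_mul {ι : Type*} (s : Finset ι) {x y : ι → ℝ}
    (hx : ∀ i, x i = 1 ∨ x i = -1) (hy : ∀ i, y i = 1 ∨ y i = -1) :
    ∃ k : ℤ, ∑ i ∈ s, x i - ∑ i ∈ s, y i = 2 * k := by
  have hxy : ∀ i, ∃ k : ℤ, x i - y i = 2 * k := fun i => by
    rcases hx i with h | h <;> rcases hy i with h' | h' <;> rw [h, h']
    exacts [⟨0, by norm_num⟩, ⟨1, by norm_num⟩, ⟨-1, by norm_num⟩, ⟨0, by norm_num⟩]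
  choose c hc using hxy
  refine ⟨∑ i ∈ s, c i, ?_⟩
  push_cast
  rw [← sum_sub_distrib, mul_sum]
  exact sum_congr rfl fun i _ => hc i

lemma max_add_sub_max_eq_one_or_neg_one {a b s t : ℝ} {k : ℤ} (hab : a - b = 2 * k)
    (hs : s = 1 ∨ s = -1) (ht : t = 1 ∨ t = -1) :
    max (a + s) (b + t) - max a b = 1 ∨ max (a + s) (b + t) - max a b = -1 := by
  have hs' : -1 ≤ s ∧ s ≤ 1 := by rcases hs with rfl | rfl <;> norm_num
  have ht' : -1 ≤ t ∧ t ≤ 1 := by rcases ht with rfl | rfl <;> norm_num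
  rcases lt_trichotomy k 0 with hk | rfl | hk
  · have hk' : (k : ℝ) ≤ -1 := by exact_mod_cast Int.le_sub_one_of_lt hk
    rw [max_eq_right (by linarith), max_eq_right (by linarith), add_sub_cancel_left]
    exact ht
  · obtain rfl : a = b := by simpa [sub_eq_zero] using hab
    rw [max_self, ← add_max, add_sub_cancel_left]
    rcases hs with rfl | rfl <;> rcases ht with rfl | rfl <;> norm_num
  · have hk' : (1 : ℝ) ≤ k := by exact_mod_cast hk
    rw [max_eq_left (by linarith), max_eq_left (by linarith), add_sub_cancel_left]
    exact hs

section PrefixSums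

variable {α : Type*} [LinearOrder α] [LocallyFiniteOrderBot α] [PredOrder α]

lemma sum_Iio_eq_max_of_sum_Iic_eq_max {x y z : α → ℝ}
    (h : ∀ m, ∑ i ∈ Iic m, z i = max (∑ i ∈ Iic m, x i) (∑ i ∈ Iic m, y i)) (m : α) :
    ∑ i ∈ Iio m, z i = max (∑ i ∈ Iio m, x i) (∑ i ∈ Iio m, y i) := by
  by_cases hm : IsMin m
  · simp [hm.finsetIio_eq]
  · simp only [← Iic_pred_eq_Iio_of_not_isMin hm, h]

lemma eq_one_or_neg_one_of_sum_Iic_eq_max {x y z : α → ℝ}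
    (hx : ∀ i, x i = 1 ∨ x i = -1) (hy : ∀ i, y i = 1 ∨ y i = -1)
    (h : ∀ m, ∑ i ∈ Iic m, z i = max (∑ i ∈ Iic m, x i) (∑ i ∈ Iic m, y i)) (m : α) :
    z m = 1 ∨ z m = -1 := by
  obtain ⟨k, hk⟩ := exists_int_sum_sub_sum_eq_two_mul (Iio m) hx hy
  have hz : z m = max (∑ i ∈ Iio m, x i + x m) (∑ i ∈ Iio m, y i + y m)
      - max (∑ i ∈ Iio m, x i) (∑ i ∈ Iio m, y i) := by
    rw [← sum_Iio_eq_max_of_sum_Iic_eq_max h, sum_Iio_add_eq_sum_Iic, sum_Iio_add_eq_sum_Iic,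
      ← h, ← sum_Iio_add_eq_sum_Iic]
    ring
  rw [hz]
  exact max_add_sub_max_eq_one_or_neg_one hk (hx m) (hy m)

lemma eq_one_or_neg_one_of_sum_Iic_eq_min {x y z : α → ℝ}
    (hx : ∀ i, x i = 1 ∨ x i = -1) (hy : ∀ i, y i = 1 ∨ y i = -1)
    (h : ∀ m, ∑ i ∈ Iic m, z i = min (∑ i ∈ Iic m, x i) (∑ i ∈ Iic m, y i)) (m : α) :
    z m = 1 ∨ z m = -1 := by
  have neg_sign : ∀ {w : α → ℝ}, (∀ i, w i = 1 ∨ w i = -1) → ∀ i, -w i = 1 ∨ -w i = -1 :=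
    fun hw i => by rcases hw i with hwi | hwi <;> simp [hwi]
  have := eq_one_or_neg_one_of_sum_Iic_eq_max (neg_sign hx) (neg_sign hy) (z := fun i => -z i)
    (fun m => by simp only [sum_neg_distrib, h, max_neg_neg]) m
  rcases this with hzm | hzm
  · exact Or.inr (by linarith)
  · exact Or.inl (by linarith)

end PrefixSums

theorem stmt_11 (n : ℕ) (e₁ e₂ : Fin n → ℝ)
    (he₁ : ∀ i, e₁ i = 1 ∨ e₁ i = -1) (he₂ : ∀ i, e₂ i = 1 ∨ e₂ i = -1)
    (sup inf : Fin n → ℝ)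
    (hsup : ∀ m, cumsum sup m = max (cumsum e₁ m) (cumsum e₂ m))
    (hinf : ∀ m, cumsum inf m = min (cumsum e₁ m) (cumsum e₂ m)) :
    (∀ i, sup i = 1 ∨ sup i = -1) ∧ (∀ i, inf i = 1 ∨ inf i = -1) := by
  simp only [cumsum_eq_sum_Iic] at hsup hinf
  exact ⟨eq_one_or_neg_one_of_sum_Iic_eq_max he₁ he₂ hsup,
    eq_one_or_neg_one_of_sum_Iic_eq_min he₁ he₂ hinf⟩
end

section
/- Let A = {p + q·r : r = 1, …, k} be an arithmetic progression for some p, q ∈ ℝ and integer k ≥ 1, and let e_1, e_2 ∈ A^n (i.e. every coordinate of e_1 and of e_2 lies in A). Then e_1 ∨ e_2 ∈ A^n and e_1 ∧ e_2 ∈ A^n. -/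
/-- The arithmetic progression `A = {p + q·r : r = 1,…,k}`. -/
def inAP (p q : ℝ) (k : ℕ) (x : ℝ) : Prop :=
  ∃ r : ℕ, 1 ≤ r ∧ r ≤ k ∧ x = p + q * r

/-!
Every coordinate of `e₁` and `e₂` is `≡ p [PMOD q]`, so their cumulative sums are congruent
modulo `q`. Writing `a, b` for the cumulative sums of `e₁, e₂` up to `i` and `c, d` for those
strictly before `i`, the `i`-th coordinate of `e₁ ∨ e₂` is `max a b - max c d`. Since
`max a b ≡ a` and `max c d ≡ c`, it is `≡ a - c = e₁ i ≡ p`, and it lies between `a - c = e₁ i`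
and `b - d = e₂ i`. An element of `p + qℤ` lying between two elements of `A` belongs to `A`.
The same argument works for `min`.
-/

open Finset AddCommGroup

theorem sum_modEq_sum {ι G : Type*} [AddCommGroup G] {p : G} {s : Finset ι} {f g : ι → G}
    (h : ∀ i ∈ s, f i ≡ g i [PMOD p]) : ∑ i ∈ s, f i ≡ ∑ i ∈ s, g i [PMOD p] := by
  simp only [modEq_iff_eq_mod_zmultiples, QuotientAddGroup.mk_sum] at h ⊢
  exact Finset.sum_congr rfl h

section LinearOrderedAddCommGroup

variable {α : Type*} [AddCommGroup α] [LinearOrder α] [IsOrderedAddMonoid α]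

theorem max_sub_max_mem_uIcc (a b c d : α) : max a b - max c d ∈ Set.uIcc (a - c) (b - d) := by
  rcases le_total a b with hab | hab <;> rcases le_total c d with hcd | hcd
  · rw [max_eq_right hab, max_eq_right hcd]; exact Set.right_mem_uIcc
  · rw [max_eq_right hab, max_eq_left hcd]
    exact Set.mem_uIcc_of_le (sub_le_sub_right hab c) (sub_le_sub_left hcd b)
  · rw [max_eq_left hab, max_eq_right hcd]
    exact Set.mem_uIcc_of_ge (sub_le_sub_right hab d) (sub_le_sub_left hcd a)
  · rw [max_eq_left hab, max_eq_left hcd]; exact Set.left_mem_uIcc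

theorem min_sub_min_mem_uIcc (a b c d : α) : min a b - min c d ∈ Set.uIcc (a - c) (b - d) := by
  have h := max_sub_max_mem_uIcc (-c) (-d) (-a) (-b)
  rwa [max_neg_neg, max_neg_neg, neg_sub_neg, neg_sub_neg, neg_sub_neg] at h

end LinearOrderedAddCommGroup

theorem inAP.modEq {p q x : ℝ} {k : ℕ} (h : inAP p q k x) : p ≡ x [PMOD q] := by
  obtain ⟨r, -, -, rfl⟩ := h
  exact modEq_iff_eq_add_zsmul.2 ⟨r, by simp [mul_comm]⟩

theorem inAP_of_modEq_of_mem_uIcc {p q x y z : ℝ} {k : ℕ} (hx : inAP p q k x)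
    (hy : inAP p q k y) (hz : p ≡ z [PMOD q]) (hxyz : z ∈ Set.uIcc x y) : inAP p q k z := by
  obtain ⟨t, rfl⟩ := modEq_iff_eq_add_zsmul.1 hz
  obtain ⟨r₁, h₁, hk₁, rfl⟩ := hx
  obtain ⟨r₂, h₂, hk₂, rfl⟩ := hy
  rcases eq_or_ne q 0 with rfl | hq
  · exact ⟨r₁, h₁, hk₁, by simp⟩
  have ht : (t : ℝ) ∈ Set.uIcc (r₁ : ℝ) r₂ := by
    have h : (t : ℝ) ∈ (q * ·) ⁻¹' ((p + ·) ⁻¹' Set.uIcc (p + q * r₁) (p + q * r₂)) := by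
      rwa [zsmul_eq_mul, mul_comm (t : ℝ)] at hxyz
    rwa [Set.preimage_const_add_uIcc, Set.preimage_const_mul_uIcc hq, add_sub_cancel_left,
      add_sub_cancel_left, mul_div_cancel_left₀ _ hq, mul_div_cancel_left₀ _ hq] at h
  obtain ⟨ht₁, htk⟩ : (t : ℝ) ∈ Set.Icc 1 (k : ℝ) :=
    Set.uIcc_subset_Icc ⟨by exact_mod_cast h₁, by exact_mod_cast hk₁⟩
      ⟨by exact_mod_cast h₂, by exact_mod_cast hk₂⟩ ht
  lift t to ℕ using by exact_mod_cast zero_le_one.trans ht₁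
  exact ⟨t, by exact_mod_cast ht₁, by exact_mod_cast htk, by simp [mul_comm]⟩

section Cumsum

variable {n : ℕ}

def cumsumBefore (x : Fin n → ℝ) (m : Fin n) : ℝ :=
  ∑ i ∈ univ.filter (fun i => i < m), x i

theorem cumsum_eq_cumsumBefore_add (x : Fin n → ℝ) (m : Fin n) :
    cumsum x m = cumsumBefore x m + x m := by
  have h : univ.filter (· ≤ m) = insert m (univ.filter (· < m)) := by
    ext i; simp [le_iff_lt_or_eq, or_comm]
  rw [cumsum, h, sum_insert (by simp), add_comm, cumsumBefore]

theorem cumsumBefore_eq_zero (x : Fin n → ℝ) {m : Fin n} (hm : (m : ℕ) = 0) :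
    cumsumBefore x m = 0 := by
  refine sum_eq_zero fun i hi => ?_
  simp only [mem_filter, mem_univ, true_and, Fin.lt_def] at hi
  omega

theorem cumsumBefore_eq_cumsum (x : Fin n → ℝ) {m m' : Fin n} (hm : (m : ℕ) = m' + 1) :
    cumsumBefore x m = cumsum x m' := by
  refine sum_congr ?_ fun _ _ => rfl
  ext i
  simp only [mem_filter, mem_univ, true_and, Fin.lt_def, Fin.le_def]
  omega

theorem cumsumBefore_eq_of_cumsum_eq (F : ℝ → ℝ → ℝ) (hF : F 0 0 = 0) {v x y : Fin n → ℝ}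
    (h : ∀ m, cumsum v m = F (cumsum x m) (cumsum y m)) (m : Fin n) :
    cumsumBefore v m = F (cumsumBefore x m) (cumsumBefore y m) := by
  rcases Nat.eq_zero_or_eq_succ_pred m with hm | hm
  · simp only [cumsumBefore_eq_zero _ hm, hF]
  · let m' : Fin n := ⟨(m : ℕ).pred, by omega⟩
    simp only [cumsumBefore_eq_cumsum _ (m' := m') hm, h]

end Cumsum

theorem inAP_of_cumsum_eq {n : ℕ} (F : ℝ → ℝ → ℝ) (hF : ∀ a b, F a b = a ∨ F a b = b)
    (hF_sub : ∀ a b c d, F a b - F c d ∈ Set.uIcc (a - c) (b - d)) {p q : ℝ} {k : ℕ}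
    {e₁ e₂ v : Fin n → ℝ} (he₁ : ∀ i, inAP p q k (e₁ i)) (he₂ : ∀ i, inAP p q k (e₂ i))
    (hv : ∀ m, cumsum v m = F (cumsum e₁ m) (cumsum e₂ m)) (i : Fin n) : inAP p q k (v i) := by
  have hF_modEq : ∀ a b, a ≡ b [PMOD q] → F a b ≡ a [PMOD q] := fun a b hab => by
    rcases hF a b with h | h <;> simp only [h, modEq_refl, hab.symm]
  have he : ∀ j, e₁ j ≡ e₂ j [PMOD q] := fun j => (he₁ j).modEq.symm.trans (he₂ j).modEq
  have hv_before := cumsumBefore_eq_of_cumsum_eq F ((hF 0 0).elim id id) hv i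
  have hcoord : ∀ x : Fin n → ℝ, x i = cumsum x i - cumsumBefore x i := fun x => by
    rw [cumsum_eq_cumsumBefore_add]; ring
  refine inAP_of_modEq_of_mem_uIcc (he₁ i) (he₂ i) ?_ ?_
  · refine (he₁ i).modEq.trans ?_
    rw [hcoord v, hv, hv_before, hcoord e₁]
    exact ((hF_modEq _ _ (sum_modEq_sum fun j _ => he j)).sub
      (hF_modEq _ _ (sum_modEq_sum fun j _ => he j))).symm
  · rw [hcoord v, hv, hv_before, hcoord e₁, hcoord e₂]
    exact hF_sub _ _ _ _

theorem stmt_12_general (n : ℕ) (p q : ℝ) (k : ℕ)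
    (e₁ e₂ : Fin n → ℝ)
    (he₁ : ∀ i, inAP p q k (e₁ i)) (he₂ : ∀ i, inAP p q k (e₂ i))
    (sup inf : Fin n → ℝ)
    (hsup : ∀ m, cumsum sup m = max (cumsum e₁ m) (cumsum e₂ m))
    (hinf : ∀ m, cumsum inf m = min (cumsum e₁ m) (cumsum e₂ m)) :
    (∀ i, inAP p q k (sup i)) ∧ (∀ i, inAP p q k (inf i)) :=
  ⟨inAP_of_cumsum_eq max max_choice max_sub_max_mem_uIcc he₁ he₂ hsup,
    inAP_of_cumsum_eq min min_choice min_sub_min_mem_uIcc he₁ he₂ hinf⟩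

theorem stmt_12 (n : ℕ) (p q : ℝ) (k : ℕ) (hk : 1 ≤ k)
    (e₁ e₂ : Fin n → ℝ)
    (he₁ : ∀ i, inAP p q k (e₁ i)) (he₂ : ∀ i, inAP p q k (e₂ i))
    (sup inf : Fin n → ℝ)
    (hsup : ∀ m, cumsum sup m = max (cumsum e₁ m) (cumsum e₂ m))
    (hinf : ∀ m, cumsum inf m = min (cumsum e₁ m) (cumsum e₂ m)) :
    (∀ i, inAP p q k (sup i)) ∧ (∀ i, inAP p q k (inf i)) :=
  stmt_12_general n p q k e₁ e₂ he₁ he₂ sup inf hsup hinf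
end

section
/- Let e_1, …, e_k ∈ {+1,−1}^n. Call a pair (R, λ) ∈ ℝ^n × ℝ^k feasible if λ^i ≥ 0 for all i, λ^1 + ⋯ + λ^k = 1, and R − ∑_{i=1}^k λ^i e_i ∈ Q*. Then a feasible pair (R, λ) minimizes ½⟨R,R⟩ over all feasible pairs (i.e. ⟨R,R⟩ ≤ ⟨S,S⟩ for every feasible (S, μ)) if and only if R ∈ Q and ⟨e_i, R⟩ ≥ ⟨R, R⟩ for all i = 1, …, k. -/
/-- Feasibility for the quadratic program associated to `e₁,…,e_k`. -/
def Feasible {n k : ℕ} (e : Fin k → Fin n → ℝ) (R : Fin n → ℝ) (lam : Fin k → ℝ) : Prop :=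
  (∀ i, 0 ≤ lam i) ∧ (∑ i, lam i = 1) ∧
    inQdual (fun j => R j - ∑ i, lam i * e i j)

/-!
The feasible vectors `S` form a convex set (the constraints are linear in `(S, λ)` and `Q*` is a
convex cone), so `R` is its point of least norm iff `⟨R, R⟩ ≤ ⟨S, R⟩` for every feasible `S`.
Testing this against `S = R + V` with `V ∈ Q*` gives `R ∈ Q** = Q`, and against `S = eᵢ`
(with `λ` the `i`-th unit vector) gives `⟨R, R⟩ ≤ ⟨eᵢ, R⟩`. Conversely, for feasible `(S, μ)`,
`⟨S, R⟩ = ⟨S - ∑ μⁱ eᵢ, R⟩ + ∑ μⁱ ⟨eᵢ, R⟩ ≥ 0 + ⟨R, R⟩`.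
-/

open Filter Topology

section MinNorm

variable {ι : Type*} [Fintype ι]

lemma dotProduct_add_smul_self (x y : ι → ℝ) (t : ℝ) :
    (x + t • y) ⬝ᵥ (x + t • y) = x ⬝ᵥ x + t * (2 * (x ⬝ᵥ y) + t * (y ⬝ᵥ y)) := by
  simp only [add_dotProduct, dotProduct_add, smul_dotProduct, dotProduct_smul, smul_eq_mul,
    dotProduct_comm y x]
  ring

lemma nonneg_of_forall_add_mul_nonneg {b c : ℝ}
    (h : ∀ t : ℝ, 0 < t → t ≤ 1 → 0 ≤ c + t * b) : 0 ≤ c := by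
  have hlim : Tendsto (fun t => c + t * b) (𝓝[>] 0) (𝓝 c) :=
    ((continuous_const.add (continuous_id.mul continuous_const)).tendsto' 0 c
      (by simp)).mono_left nhdsWithin_le_nhds
  refine ge_of_tendsto hlim ?_
  filter_upwards [Ioc_mem_nhdsGT one_pos] with t ht using h t ht.1 ht.2

theorem forall_dotProduct_self_le_iff {C : Set (ι → ℝ)} (hC : Convex ℝ C) {R : ι → ℝ}
    (hR : R ∈ C) : (∀ S ∈ C, R ⬝ᵥ R ≤ S ⬝ᵥ S) ↔ ∀ S ∈ C, R ⬝ᵥ R ≤ S ⬝ᵥ R := by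
  constructor
  · intro hmin S hS
    have hsegment : ∀ t : ℝ, 0 < t → t ≤ 1 →
        0 ≤ 2 * (R ⬝ᵥ (S - R)) + t * ((S - R) ⬝ᵥ (S - R)) := by
      intro t ht0 ht1
      have hmem : R + t • (S - R) ∈ C := by
        convert hC hR hS (sub_nonneg.mpr ht1) ht0.le (sub_add_cancel 1 t) using 1
        module
      have := hmin _ hmem
      rw [dotProduct_add_smul_self] at this
      exact (mul_nonneg_iff_of_pos_left ht0).mp (by linarith)
    have := nonneg_of_forall_add_mul_nonneg hsegment
    rw [dotProduct_sub, dotProduct_comm R S] at this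
    linarith
  · intro hvar S hS
    have hsq := dotProduct_self_star_nonneg (S - R)
    simp only [star_trivial, sub_dotProduct, dotProduct_sub, dotProduct_comm R S] at hsq
    linarith [hvar S hS]

end MinNorm

lemma inQdual_iff {n : ℕ} {V : Fin n → ℝ} : inQdual V ↔ ∀ a, inQ a → 0 ≤ V ⬝ᵥ a := Iff.rfl

lemma inQdual.add {n : ℕ} {V W : Fin n → ℝ} (hV : inQdual V) (hW : inQdual W) :
    inQdual (V + W) := inQdual_iff.mpr fun a ha => by
  rw [inQdual_iff] at hV hW
  simpa only [add_dotProduct] using add_nonneg (hV a ha) (hW a ha)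

lemma inQdual.smul {n : ℕ} {V : Fin n → ℝ} (hV : inQdual V) {c : ℝ} (hc : 0 ≤ c) :
    inQdual (c • V) := inQdual_iff.mpr fun a ha => by
  rw [inQdual_iff] at hV
  simpa only [smul_dotProduct, smul_eq_mul] using mul_nonneg hc (hV a ha)

/-- `Q** ⊆ Q`, tested against the generators `eᵢ - eⱼ` (`i ≤ j`) and `eᵢ` of `Q*`. -/
lemma inQ_of_forall_inQdual {n : ℕ} {R : Fin n → ℝ} (h : ∀ V, inQdual V → 0 ≤ V ⬝ᵥ R) :
    inQ R := by
  refine ⟨fun i j hij => ?_, fun i => ?_⟩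
  · have hV : inQdual (Pi.single i 1 - Pi.single j 1) := inQdual_iff.mpr fun a ha => by
      simpa [sub_dotProduct, single_dotProduct] using ha.1 i j hij
    simpa [sub_dotProduct, single_dotProduct] using h _ hV
  · have hV : inQdual (Pi.single i 1) := inQdual_iff.mpr fun a ha => by
      simpa [single_dotProduct] using ha.2 i
    simpa [single_dotProduct] using h _ hV

section Feasible

variable {n k : ℕ} (e : Fin k → Fin n → ℝ)

lemma feasible_iff {S : Fin n → ℝ} {mu : Fin k → ℝ} :
    Feasible e S mu ↔ (∀ i, 0 ≤ mu i) ∧ ∑ i, mu i = 1 ∧ inQdual (S - ∑ i, mu i • e i) := by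
  have hres : (fun j => S j - ∑ i, mu i * e i j) = S - ∑ i, mu i • e i := by
    ext j
    simp [Finset.sum_apply]
  rw [Feasible, hres]

def feasibleSet : Set (Fin n → ℝ) := {S | ∃ mu, Feasible e S mu}

lemma convex_feasibleSet : Convex ℝ (feasibleSet e) := by
  rintro S ⟨mu, hS⟩ T ⟨nu, hT⟩ a b ha hb hab
  rw [feasible_iff] at hS hT
  refine ⟨a • mu + b • nu, (feasible_iff e).mpr ⟨fun i => ?_, ?_, ?_⟩⟩
  · simpa using add_nonneg (mul_nonneg ha (hS.1 i)) (mul_nonneg hb (hT.1 i))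
  · simp [Finset.sum_add_distrib, ← Finset.mul_sum, hS.2.1, hT.2.1, hab]
  · have hres : a • S + b • T - ∑ i, (a • mu + b • nu) i • e i
        = a • (S - ∑ i, mu i • e i) + b • (T - ∑ i, nu i • e i) := by
      simp only [Pi.add_apply, Pi.smul_apply, smul_eq_mul, add_smul, mul_smul,
        Finset.sum_add_distrib, ← Finset.smul_sum]
      module
    rw [hres]
    exact (hS.2.2.smul ha).add (hT.2.2.smul hb)

variable {e}

lemma Feasible.add_inQdual {S V : Fin n → ℝ} {mu : Fin k → ℝ} (hS : Feasible e S mu)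
    (hV : inQdual V) : Feasible e (S + V) mu := by
  rw [feasible_iff] at hS ⊢
  refine ⟨hS.1, hS.2.1, ?_⟩
  rw [add_sub_right_comm]
  exact hS.2.2.add hV

lemma feasible_single (i : Fin k) : Feasible e (e i) (Pi.single i 1) := by
  rw [feasible_iff]
  refine ⟨fun j => ?_, by simp, fun a _ => by simp [Pi.single_apply]⟩
  by_cases h : j = i <;> simp [h]

lemma Feasible.dotProduct_self_le_dotProduct {R S : Fin n → ℝ} {mu : Fin k → ℝ}
    (hS : Feasible e S mu) (hRQ : inQ R) (hRe : ∀ i, R ⬝ᵥ R ≤ e i ⬝ᵥ R) :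
    R ⬝ᵥ R ≤ S ⬝ᵥ R := by
  obtain ⟨hmu0, hmu1, hres⟩ := (feasible_iff e).mp hS
  have hsplit : S ⬝ᵥ R = (S - ∑ i, mu i • e i) ⬝ᵥ R + ∑ i, mu i * (e i ⬝ᵥ R) := by
    simp [sub_dotProduct, sum_dotProduct, smul_dotProduct]
  have hconv : R ⬝ᵥ R ≤ ∑ i, mu i * (e i ⬝ᵥ R) := calc
    R ⬝ᵥ R = ∑ i, mu i * (R ⬝ᵥ R) := by rw [← Finset.sum_mul, hmu1, one_mul]
    _ ≤ _ := Finset.sum_le_sum fun i _ => mul_le_mul_of_nonneg_left (hRe i) (hmu0 i)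
  have hdual : 0 ≤ (S - ∑ i, mu i • e i) ⬝ᵥ R := inQdual_iff.mp hres R hRQ
  linarith

end Feasible

theorem stmt_13_general (n k : ℕ) (e : Fin k → Fin n → ℝ)
    (R : Fin n → ℝ) (lam : Fin k → ℝ) (hfeas : Feasible e R lam) :
    (∀ (S : Fin n → ℝ) (mu : Fin k → ℝ), Feasible e S mu →
        ∑ j, R j * R j ≤ ∑ j, S j * S j)
      ↔
    (inQ R ∧ ∀ i, ∑ j, R j * R j ≤ ∑ j, e i j * R j) := by
  change (∀ S mu, Feasible e S mu → R ⬝ᵥ R ≤ S ⬝ᵥ S) ↔ inQ R ∧ ∀ i, R ⬝ᵥ R ≤ e i ⬝ᵥ R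
  have hmin : (∀ S mu, Feasible e S mu → R ⬝ᵥ R ≤ S ⬝ᵥ S) ↔
      ∀ S ∈ feasibleSet e, R ⬝ᵥ R ≤ S ⬝ᵥ S :=
    ⟨fun h S ⟨mu, hS⟩ => h S mu hS, fun h S mu hS => h S ⟨mu, hS⟩⟩
  rw [hmin, forall_dotProduct_self_le_iff (convex_feasibleSet e) ⟨lam, hfeas⟩]
  constructor
  · intro hvar
    refine ⟨inQ_of_forall_inQdual fun V hV => ?_, fun i => hvar _ ⟨_, feasible_single i⟩⟩
    have := hvar _ ⟨lam, hfeas.add_inQdual hV⟩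
    rw [add_dotProduct] at this
    linarith
  · rintro ⟨hRQ, hRe⟩ S ⟨mu, hS⟩
    exact hS.dotProduct_self_le_dotProduct hRQ hRe

theorem stmt_13 (n k : ℕ) (e : Fin k → Fin n → ℝ)
    (he : ∀ i j, e i j = 1 ∨ e i j = -1)
    (R : Fin n → ℝ) (lam : Fin k → ℝ) (hfeas : Feasible e R lam) :
    (∀ (S : Fin n → ℝ) (mu : Fin k → ℝ), Feasible e S mu →
        ∑ j, R j * R j ≤ ∑ j, S j * S j)
      ↔
    (inQ R ∧ ∀ i, ∑ j, R j * R j ≤ ∑ j, e i j * R j) :=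
  stmt_13_general n k e R lam hfeas
end

section
/- Let e_1, …, e_k ∈ {+1,−1}^n. Suppose (R, λ) ∈ ℝ^n × ℝ^k satisfies: λ^i ≥ 0 for all i, λ^1 + ⋯ + λ^k = 1, R − ∑λ^i e_i ∈ Q*, R ∈ Q, and ⟨e_i, R⟩ ≥ ⟨R, R⟩ for all i. Suppose (S, μ) ∈ ℝ^n × ℝ^k satisfies: μ^i ≥ 0 for all i, μ^1 + ⋯ + μ^k = 1, and S − ∑μ^i e_i ∈ Q*. Then ⟨S,S⟩ − ⟨R,R⟩ ≥ ⟨S−R, S−R⟩. In particular, there is exactly one R ∈ ℝ^n for which there exists λ satisfying the first set of conditions. -/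
/-- The optimality conditions of Theorem `SQP`: feasibility together with
`R ∈ Q` and `⟨e i, R⟩ ≥ ⟨R, R⟩` for all `i`. -/
def OptCond {n k : ℕ} (e : Fin k → Fin n → ℝ) (R : Fin n → ℝ) (lam : Fin k → ℝ) : Prop :=
  (∀ i, 0 ≤ lam i) ∧ (∑ i, lam i = 1) ∧
    inQdual (fun j => R j - ∑ i, lam i * e i j) ∧
    inQ R ∧ (∀ i, ∑ j, R j * R j ≤ ∑ j, e i j * R j)

/-!
Write `e` for the matrix with rows `eᵢ`, so that `∑ μⁱ eᵢ = μ ᵥ* e`. Testing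
`S - μ ᵥ* e ∈ Q*` against `R ∈ Q` gives
`⟨S, R⟩ ≥ ∑ μⁱ ⟨eᵢ, R⟩ ≥ (∑ μⁱ) ⟨R, R⟩ = ⟨R, R⟩`,
and `|S - R|² = |S|² - 2⟨S, R⟩ + |R|² ≤ |S|² - |R|²`. Applying this to two optimal
points `R`, `R'` in both orders and adding gives `2|R - R'|² ≤ 0`.
-/

open Matrix

theorem dotProduct_le_of_inQdual_sub {n : ℕ} {S W a : Fin n → ℝ} (hSW : inQdual (S - W))
    (ha : inQ a) : W ⬝ᵥ a ≤ S ⬝ᵥ a := by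
  rw [← sub_nonneg, ← sub_dotProduct]
  exact hSW a ha

section OrderedRing

variable {ι κ 𝕜 : Type*} [Fintype ι] [Fintype κ] [CommRing 𝕜] [PartialOrder 𝕜]
  [IsOrderedRing 𝕜]

theorem le_vecMul_dotProduct {e : Matrix κ ι 𝕜} {mu : κ → 𝕜}
    (hmu : ∀ i, 0 ≤ mu i) (hmusum : ∑ i, mu i = 1) {R : ι → 𝕜} {c : 𝕜}
    (hc : ∀ i, c ≤ e i ⬝ᵥ R) : c ≤ mu ᵥ* e ⬝ᵥ R := by
  rw [← dotProduct_mulVec]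
  calc c = ∑ i, mu i * c := by rw [← Finset.sum_mul, hmusum, one_mul]
    _ ≤ ∑ i, mu i * (e *ᵥ R) i :=
      Finset.sum_le_sum fun i _ => mul_le_mul_of_nonneg_left (hc i) (hmu i)

theorem sub_dotProduct_sub_le_of_dotProduct_self_le {S R : ι → 𝕜}
    (h : R ⬝ᵥ R ≤ S ⬝ᵥ R) : (S - R) ⬝ᵥ (S - R) ≤ S ⬝ᵥ S - R ⬝ᵥ R := by
  simp only [sub_dotProduct, dotProduct_sub, dotProduct_comm R S]
  linear_combination h + h

end OrderedRing

namespace OptCond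

variable {n k : ℕ} {e : Fin k → Fin n → ℝ} {R : Fin n → ℝ} {lam : Fin k → ℝ}

theorem dotProduct_self_le (hR : OptCond e R lam) {S : Fin n → ℝ} {mu : Fin k → ℝ}
    (hmu : ∀ i, 0 ≤ mu i) (hmusum : ∑ i, mu i = 1) (hS : inQdual (S - mu ᵥ* e)) :
    R ⬝ᵥ R ≤ S ⬝ᵥ R :=
  (le_vecMul_dotProduct hmu hmusum hR.2.2.2.2).trans
    (dotProduct_le_of_inQdual_sub hS hR.2.2.2.1)

theorem sub_dotProduct_sub_le (hR : OptCond e R lam) {S : Fin n → ℝ} {mu : Fin k → ℝ}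
    (hmu : ∀ i, 0 ≤ mu i) (hmusum : ∑ i, mu i = 1) (hS : inQdual (S - mu ᵥ* e)) :
    (S - R) ⬝ᵥ (S - R) ≤ S ⬝ᵥ S - R ⬝ᵥ R :=
  sub_dotProduct_sub_le_of_dotProduct_self_le (hR.dotProduct_self_le hmu hmusum hS)

theorem unique (hR : OptCond e R lam) {R' : Fin n → ℝ} {lam' : Fin k → ℝ}
    (hR' : OptCond e R' lam') : R' = R := by
  have h₁ := hR.sub_dotProduct_sub_le hR'.1 hR'.2.1 hR'.2.2.1
  have h₂ := hR'.sub_dotProduct_sub_le hR.1 hR.2.1 hR.2.2.1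
  rw [← neg_sub R' R, neg_dotProduct_neg] at h₂
  have : (R' - R) ⬝ᵥ (R' - R) = 0 :=
    le_antisymm (by linarith) (Fintype.sum_nonneg fun j => mul_self_nonneg _)
  exact sub_eq_zero.mp (dotProduct_self_eq_zero.mp this)

end OptCond

theorem stmt_14_general (n k : ℕ) (e : Fin k → Fin n → ℝ)
    (R : Fin n → ℝ) (lam : Fin k → ℝ) (hR : OptCond e R lam)
    (S : Fin n → ℝ) (mu : Fin k → ℝ)
    (hmu : ∀ i, 0 ≤ mu i) (hmusum : ∑ i, mu i = 1)
    (hS : inQdual (fun j => S j - ∑ i, mu i * e i j)) :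
    (∑ j, (S j - R j) * (S j - R j) ≤ ∑ j, S j * S j - ∑ j, R j * R j) ∧
    (∀ (R' : Fin n → ℝ) (lam' : Fin k → ℝ), OptCond e R' lam' → R' = R) :=
  ⟨hR.sub_dotProduct_sub_le hmu hmusum hS, fun _ _ hR' => hR.unique hR'⟩

theorem stmt_14 (n k : ℕ) (e : Fin k → Fin n → ℝ)
    (he : ∀ i j, e i j = 1 ∨ e i j = -1)
    (R : Fin n → ℝ) (lam : Fin k → ℝ) (hR : OptCond e R lam)
    (S : Fin n → ℝ) (mu : Fin k → ℝ)
    (hmu : ∀ i, 0 ≤ mu i) (hmusum : ∑ i, mu i = 1)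
    (hS : inQdual (fun j => S j - ∑ i, mu i * e i j)) :
    (∑ j, (S j - R j) * (S j - R j) ≤ ∑ j, S j * S j - ∑ j, R j * R j) ∧
    (∀ (R' : Fin n → ℝ) (lam' : Fin k → ℝ), OptCond e R' lam' → R' = R) :=
  stmt_14_general n k e R lam hR S mu hmu hmusum hS
end

section
/- Let e_1 = (1,1,1,1,1,1,−1,1,−1), e_2 = (1,−1,−1,−1,−1,−1,1,−1,1), e_3 = (1,1,−1,1,−1,−1,1,−1,1), e_4 = (1,−1,1,−1,1,1,−1,1,−1) in {+1,−1}^9 (these are ε_5, ε_250, ε_90, ε_165 in the binary enumeration). Then (e_1, e_2, e_3, e_4) is a 4-tuplet: for every a ∈ Q, at least 2 of the 4 numbers |e_1 a|, |e_2 a|, |e_3 a|, |e_4 a| are ≤ ‖a‖. -/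
/-!
Write `eₗ·a = a₀ ± t` for the first pair and `eₗ·a = a₀ ± u` for the second, where `t` and `u` are
fixed signed sums of `a₁, …, a₈`. On the cone `Q` we have `0 ≤ a₀ ≤ ‖a‖`, `0 ≤ t`, `u ≤ t` and
`0 ≤ a₀ + u`, so the first pair has a good member as soon as `t - a₀ ≤ ‖a‖`, and the second one
unless `u - a₀ > ‖a‖`. Two quadratic inequalities valid on `Q`,
`v² + w² + vw ≤ 3‖a‖²` and `v² + 5w'² ≤ 6‖a‖²` with `v = t - a₀`, `w = a₀ + u`, `w' = a₀ - u`,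
show that `v > ‖a‖` forces both `|a₀ ± u| ≤ ‖a‖`; in particular the second pair never fails.
-/

open Finset

lemma le_or_le_of_quadratic_le {p q r x y N : ℝ} (hp : 0 < p) (hq : 0 ≤ q) (hr : 0 ≤ r)
    (hN : 0 ≤ N) (h : p * x ^ 2 + q * y ^ 2 + r * (x * y) ≤ (p + q + r) * N ^ 2) :
    x ≤ N ∨ y ≤ N := by
  by_contra! ⟨hx, hy⟩
  have hxx : N ^ 2 < x ^ 2 := by nlinarith
  have hyy : N ^ 2 ≤ y ^ 2 := by nlinarith
  have hxy : N ^ 2 ≤ x * y := by nlinarith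
  nlinarith [mul_lt_mul_of_pos_left hxx hp, mul_le_mul_of_nonneg_left hyy hq,
    mul_le_mul_of_nonneg_left hxy hr]

lemma abs_le_sqrt_sum_sq {ι : Type*} [Fintype ι] (a : ι → ℝ) (i : ι) :
    |a i| ≤ √(∑ j, a j ^ 2) :=
  Real.abs_le_sqrt (single_le_sum (fun j _ => sq_nonneg (a j)) (mem_univ i))

lemma two_le_card_filter_fin_four {P : Fin 4 → Prop} [DecidablePred P] (h₂₃ : P 2 ∨ P 3)
    (h : P 0 ∨ P 1 ∨ P 2 ∧ P 3) : 2 ≤ #(univ.filter P) := by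
  have pair {i j : Fin 4} (hi : P i) (hj : P j) (hij : i ≠ j) : 2 ≤ #(univ.filter P) :=
    one_lt_card.2 ⟨i, by simpa using hi, j, by simpa using hj, hij⟩
  rcases h with h | h | ⟨h₂, h₃⟩ <;> rcases h₂₃ with h' | h'
  all_goals first | exact pair h h' (by decide) | exact pair h₂ h₃ (by decide)

namespace Tuplet

def tail₁ (a : Fin 9 → ℝ) : ℝ := a 1 + a 2 + a 3 + a 4 + a 5 - a 6 + a 7 - a 8

def tail₂ (a : Fin 9 → ℝ) : ℝ := a 1 - a 2 + a 3 - a 4 - a 5 + a 6 - a 7 + a 8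

def signs : Fin 4 → Fin 9 → ℝ :=
  ![![1, 1, 1, 1, 1, 1, -1, 1, -1],
    ![1, -1, -1, -1, -1, -1, 1, -1, 1],
    ![1, 1, -1, 1, -1, -1, 1, -1, 1],
    ![1, -1, 1, -1, 1, 1, -1, 1, -1]]

lemma sum_signs_mul (a : Fin 9 → ℝ) (ℓ : Fin 4) : ∑ i, signs ℓ i * a i =
    ![a 0 + tail₁ a, a 0 - tail₁ a, a 0 + tail₂ a, a 0 - tail₂ a] ℓ := by
  fin_cases ℓ <;> simp [signs, Fin.sum_univ_succ, tail₁, tail₂] <;> ring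

lemma sum_sq_eq (a : Fin 9 → ℝ) : ∑ i, a i ^ 2 =
    a 0 ^ 2 + a 1 ^ 2 + a 2 ^ 2 + a 3 ^ 2 + a 4 ^ 2 + a 5 ^ 2 + a 6 ^ 2 + a 7 ^ 2 + a 8 ^ 2 := by
  simp [Fin.sum_univ_succ]
  ring

variable {a : Fin 9 → ℝ}

lemma consecutive_sub_nonneg (ha : Antitone a) :
    0 ≤ a 0 - a 1 ∧ 0 ≤ a 1 - a 2 ∧ 0 ≤ a 2 - a 3 ∧ 0 ≤ a 3 - a 4 ∧
      0 ≤ a 4 - a 5 ∧ 0 ≤ a 5 - a 6 ∧ 0 ≤ a 6 - a 7 ∧ 0 ≤ a 7 - a 8 := by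
  refine ⟨?_, ?_, ?_, ?_, ?_, ?_, ?_, ?_⟩ <;> exact sub_nonneg.2 (ha (by decide))

lemma tail_bounds (ha : Antitone a) (h8 : 0 ≤ a 8) :
    0 ≤ tail₁ a ∧ tail₂ a ≤ tail₁ a ∧ 0 ≤ a 0 + tail₂ a := by
  obtain ⟨d₀, d₁, d₂, d₃, d₄, d₅, d₆, d₇⟩ := consecutive_sub_nonneg ha
  unfold tail₁ tail₂
  refine ⟨?_, ?_, ?_⟩ <;> linarith

/- In the coordinates `a i - a (i + 1)` and `a 8`, which are nonnegative on the cone, the gap in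
each of the two quadratic inequalities below is a form with nonnegative coefficients. -/
lemma tail₁_sub_le_or_add_tail₂_le (ha : Antitone a) (h8 : 0 ≤ a 8) :
    tail₁ a - a 0 ≤ √(∑ i, a i ^ 2) ∨ a 0 + tail₂ a ≤ √(∑ i, a i ^ 2) := by
  refine le_or_le_of_quadratic_le one_pos zero_le_one zero_le_one (Real.sqrt_nonneg _) ?_
  obtain ⟨d₀, d₁, d₂, d₃, d₄, d₅, d₆, d₇⟩ := consecutive_sub_nonneg ha
  rw [Real.sq_sqrt (by positivity), sum_sq_eq, tail₁, tail₂]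
  nlinarith

lemma tail₁_sub_le_or_sub_tail₂_le (ha : Antitone a) (h8 : 0 ≤ a 8) :
    tail₁ a - a 0 ≤ √(∑ i, a i ^ 2) ∨ a 0 - tail₂ a ≤ √(∑ i, a i ^ 2) := by
  refine le_or_le_of_quadratic_le one_pos (by norm_num : (0 : ℝ) ≤ 5) le_rfl
    (Real.sqrt_nonneg _) ?_
  obtain ⟨d₀, d₁, d₂, d₃, d₄, d₅, d₆, d₇⟩ := consecutive_sub_nonneg ha
  rw [Real.sq_sqrt (by positivity), sum_sq_eq, tail₁, tail₂]
  nlinarith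

lemma abs_le_of_tail_bounds {x t u N : ℝ} (hx : 0 ≤ x) (hxN : x ≤ N) (ht : 0 ≤ t)
    (hut : u ≤ t) (hxu : 0 ≤ x + u) (hA : t - x ≤ N ∨ x + u ≤ N)
    (hB : t - x ≤ N ∨ x - u ≤ N) :
    (|x + u| ≤ N ∨ |x - u| ≤ N) ∧ (|x + t| ≤ N ∨ |x - t| ≤ N ∨ |x + u| ≤ N ∧ |x - u| ≤ N) := by
  simp only [abs_le]
  by_cases htx : t - x ≤ N
  · refine ⟨?_, Or.inr (Or.inl ⟨by linarith, by linarith⟩)⟩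
    rcases le_total 0 u with hu | hu
    · exact Or.inr ⟨by linarith, by linarith⟩
    · exact Or.inl ⟨by linarith, by linarith⟩
  · have hA := hA.resolve_left htx
    have hB := hB.resolve_left htx
    exact ⟨Or.inl ⟨by linarith, hA⟩, Or.inr (Or.inr ⟨⟨by linarith, hA⟩, ⟨by linarith, hB⟩⟩)⟩

end Tuplet

open Tuplet

open scoped Classical

theorem stmt_16 (a : Fin 9 → ℝ)
    (hdec : ∀ i j : Fin 9, i ≤ j → a j ≤ a i) (hpos : ∀ i, 0 ≤ a i) :
    2 ≤ ((Finset.univ : Finset (Fin 4)).filter (fun ℓ =>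
        |∑ i, (![![1, 1, 1, 1, 1, 1, -1, 1, -1],
                 ![1, -1, -1, -1, -1, -1, 1, -1, 1],
                 ![1, 1, -1, 1, -1, -1, 1, -1, 1],
                 ![1, -1, 1, -1, 1, 1, -1, 1, -1]] : Fin 4 → Fin 9 → ℝ) ℓ i * a i|
          ≤ Real.sqrt (∑ i, a i ^ 2))).card := by
  have ha : Antitone a := hdec
  obtain ⟨ht, hut, hxu⟩ := tail_bounds ha (hpos 8)
  obtain ⟨h₂₃, h⟩ := abs_le_of_tail_bounds (hpos 0)
    ((le_abs_self _).trans (abs_le_sqrt_sum_sq a 0)) ht hut hxu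
    (tail₁_sub_le_or_add_tail₂_le ha (hpos 8)) (tail₁_sub_le_or_sub_tail₂_le ha (hpos 8))
  change 2 ≤ #(univ.filter fun ℓ => |∑ i, signs ℓ i * a i| ≤ √(∑ i, a i ^ 2))
  simp only [sum_signs_mul]
  exact two_le_card_filter_fin_four (by simpa using h₂₃) (by simpa using h)
end

section
/- Let e_1 = (1,1,1,1,1,1,1,1,1), e_2 = (1,−1,−1,−1,−1,−1,−1,−1,−1), e_3 = (1,1,−1,1,−1,−1,−1,−1,1), e_4 = (1,−1,1,−1,1,1,1,1,−1), e_5 = (1,1,−1,−1,1,−1,1,1,−1), e_6 = (1,−1,1,1,−1,1,−1,−1,1), e_7 = (1,1,−1,−1,1,−1,−1,1,−1), e_8 = (1,−1,1,1,−1,1,1,−1,1) in {+1,−1}^9 (these are ε_0, ε_255, ε_94, ε_161, ε_105, ε_150, ε_109, ε_146 in the binary enumeration). Then (e_1, …, e_8) is an 8-tuplet: for every a ∈ Q, at least 4 of the 8 numbers |e_1 a|, …, |e_8 a| are ≤ ‖a‖. -/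
/-!
Write `a = (p, x)` with `p = a 0` and `x ∈ ℝ⁸` nonincreasing and nonnegative, and `r = ‖a‖`, so
that `p ≤ r` and `p ^ 2 + x ⬝ᵥ x ≤ r ^ 2`. The eight products are `p ± ∑ x`, `p ± ε₁ ⬝ᵥ x`,
`p ± ε₂ ⬝ᵥ x`, `p ± ε₃ ⬝ᵥ x`. In each of the last three pairs one member is at most `r`, since
`|εₖ ⬝ᵥ x| ≤ p + r` for ordered `x`. A fourth one comes either from `|p - ∑ x| ≤ r` or from a pair
with `p + |εₖ ⬝ᵥ x| ≤ r`, in which both members are at most `r`. If neither happens, eliminating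
`p` and `r` leaves `x ⬝ᵥ x + 2 x₀ ∑ x < (∑ x) ^ 2` and `(∑ x) |εₖ ⬝ᵥ x| < x ⬝ᵥ x` for `k = 1, 2, 3`,
and these quadratic inequalities have no nonincreasing nonnegative solution.
-/

open scoped Classical

open Finset

/- The rows of the 8-tuplet are `(1, ±1, …, ±1)`, `(1, ±ε₁)`, `(1, ±ε₂)` and `(1, ±ε₃)`. -/
def ε₁ : Fin 8 → ℝ := ![1, -1, 1, -1, -1, -1, -1, 1]
def ε₂ : Fin 8 → ℝ := ![1, -1, -1, 1, -1, 1, 1, -1]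
def ε₃ : Fin 8 → ℝ := ![1, -1, -1, 1, -1, -1, 1, -1]

set_option maxRecDepth 100000 in
theorem four_le_card_of_pairs (s : Finset (Fin 8)) (h₁ : 2 ∈ s ∨ 3 ∈ s) (h₂ : 4 ∈ s ∨ 5 ∈ s)
    (h₃ : 6 ∈ s ∨ 7 ∈ s)
    (h₀ : 1 ∈ s ∨ (2 ∈ s ∧ 3 ∈ s) ∨ (4 ∈ s ∧ 5 ∈ s) ∨ (6 ∈ s ∧ 7 ∈ s)) : 4 ≤ #s := by
  revert s; decide

theorem abs_add_le_or_abs_sub_le {p t r : ℝ} (hpr : p ≤ r) (ht : |t| ≤ p + r) :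
    |p + t| ≤ r ∨ |p - t| ≤ r := by
  rcases abs_cases t with ⟨h, ht₀⟩ | ⟨h, ht₀⟩
  · exact Or.inr (abs_le.2 ⟨by linarith, by linarith⟩)
  · exact Or.inl (abs_le.2 ⟨by linarith, by linarith⟩)

theorem abs_add_le_and_abs_sub_le {p t r : ℝ} (hp : 0 ≤ p) (h : p + |t| ≤ r) :
    |p + t| ≤ r ∧ |p - t| ≤ r := by
  constructor <;> refine abs_le.2 ⟨?_, ?_⟩ <;> linarith [abs_le.1 (le_refl |t|)]

theorem add_two_mul_lt_sq {p q r S : ℝ} (hr : 0 ≤ r) (hq : p ^ 2 + q ≤ r ^ 2)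
    (hS : p + r < S) : q + 2 * p * S < S ^ 2 := by
  nlinarith

theorem lt_mul_abs_of_sq_add_le_sq {p q r S t : ℝ} (hp : 0 ≤ p) (hr : 0 ≤ r)
    (hq : p ^ 2 + q ≤ r ^ 2) (hS : p + r < S) (ht : r < p + |t|) : q < S * |t| := by
  have hqS := add_two_mul_lt_sq hr hq hS
  have hqt : q < 2 * p * |t| + |t| ^ 2 := by nlinarith
  -- multiply `hqt` by `S` and `hqS` by `|t|`, then cancel the factor `S + |t|`
  nlinarith [abs_nonneg t]

theorem Antitone.chain_fin_eight {x : Fin 8 → ℝ} (hx : Antitone x) :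
    x 1 ≤ x 0 ∧ x 2 ≤ x 1 ∧ x 3 ≤ x 2 ∧ x 4 ≤ x 3 ∧ x 5 ≤ x 4 ∧ x 6 ≤ x 5 ∧ x 7 ≤ x 6 :=
  ⟨hx (by decide), hx (by decide), hx (by decide), hx (by decide), hx (by decide),
    hx (by decide), hx (by decide)⟩

theorem abs_ε_dotProduct_le {x : Fin 8 → ℝ} (hx : Antitone x) (h7 : 0 ≤ x 7) {p r : ℝ}
    (hp : x 0 ≤ p) (hr : 0 ≤ r) (hq : x ⬝ᵥ x ≤ r ^ 2) :
    |ε₁ ⬝ᵥ x| ≤ p + r ∧ |ε₂ ⬝ᵥ x| ≤ p + r ∧ |ε₃ ⬝ᵥ x| ≤ p + r := by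
  obtain ⟨h0, h1, h2, h3, h4, h5, h6⟩ := hx.chain_fin_eight
  simp only [dotProduct, Fin.sum_univ_eight, ε₁, ε₂, ε₃, Matrix.cons_val, one_mul, neg_mul] at *
  have h56 : x 5 + x 6 ≤ r := by nlinarith
  refine ⟨abs_le.2 ⟨?_, ?_⟩, abs_le.2 ⟨?_, ?_⟩, abs_le.2 ⟨?_, ?_⟩⟩ <;> linarith

set_option maxHeartbeats 1000000 in
theorem sq_sum_le_or_sum_mul_abs_ε_dotProduct_le {x : Fin 8 → ℝ} (hx : Antitone x)
    (h7 : 0 ≤ x 7) :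
    (∑ i, x i) ^ 2 ≤ x ⬝ᵥ x + 2 * x 0 * ∑ i, x i ∨ (∑ i, x i) * |ε₁ ⬝ᵥ x| ≤ x ⬝ᵥ x ∨
      (∑ i, x i) * |ε₂ ⬝ᵥ x| ≤ x ⬝ᵥ x ∨ (∑ i, x i) * |ε₃ ⬝ᵥ x| ≤ x ⬝ᵥ x := by
  obtain ⟨h0, h1, h2, h3, h4, h5, h6⟩ := hx.chain_fin_eight
  by_contra! h
  obtain ⟨k0, k1, k2, k3⟩ := h
  -- sharp: at `x = (1, 1, 1, 0, 0, 0, 0, 0)` all four disjuncts are equalities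
  rcases abs_cases (ε₁ ⬝ᵥ x) with ⟨e1, s1⟩ | ⟨e1, s1⟩ <;>
  rcases abs_cases (ε₂ ⬝ᵥ x) with ⟨e2, s2⟩ | ⟨e2, s2⟩ <;>
  rcases abs_cases (ε₃ ⬝ᵥ x) with ⟨e3, s3⟩ | ⟨e3, s3⟩ <;>
  rw [e1] at k1 <;> rw [e2] at k2 <;> rw [e3] at k3 <;>
  simp only [dotProduct, Fin.sum_univ_eight, ε₁, ε₂, ε₃, Matrix.cons_val, one_mul, neg_mul] at * <;>
  nlinarith

theorem abs_sub_sum_le_or_add_abs_ε_dotProduct_le {x : Fin 8 → ℝ} (hx : Antitone x)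
    (h7 : 0 ≤ x 7) {p r : ℝ} (hp : x 0 ≤ p) (hpr : p ≤ r) (hq : p ^ 2 + x ⬝ᵥ x ≤ r ^ 2) :
    |p - ∑ i, x i| ≤ r ∨ p + |ε₁ ⬝ᵥ x| ≤ r ∨ p + |ε₂ ⬝ᵥ x| ≤ r ∨ p + |ε₃ ⬝ᵥ x| ≤ r := by
  have hx0 : 0 ≤ x 0 := h7.trans (hx (Fin.zero_le 7))
  have hS : 0 ≤ ∑ i, x i := Finset.sum_nonneg fun i _ => h7.trans (hx (Fin.le_last i))
  have hp0 : 0 ≤ p := hx0.trans hp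
  have hr : 0 ≤ r := hp0.trans hpr
  by_contra! h
  obtain ⟨h₀, h₁, h₂, h₃⟩ := h
  have hpS : p + r < ∑ i, x i := by
    rcases abs_cases (p - ∑ i, x i) with ⟨e, -⟩ | ⟨e, -⟩ <;> linarith
  rcases sq_sum_le_or_sum_mul_abs_ε_dotProduct_le hx h7 with h | h | h | h
  · nlinarith [add_two_mul_lt_sq hr hq hpS]
  · linarith [lt_mul_abs_of_sq_add_le_sq hp0 hr hq hpS h₁]
  · linarith [lt_mul_abs_of_sq_add_le_sq hp0 hr hq hpS h₂]
  · linarith [lt_mul_abs_of_sq_add_le_sq hp0 hr hq hpS h₃]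

theorem stmt_18 (a : Fin 9 → ℝ)
    (hdec : ∀ i j : Fin 9, i ≤ j → a j ≤ a i) (hpos : ∀ i, 0 ≤ a i) :
    4 ≤ ((Finset.univ : Finset (Fin 8)).filter (fun ℓ =>
        |∑ i, (![![1, 1, 1, 1, 1, 1, 1, 1, 1],
                 ![1, -1, -1, -1, -1, -1, -1, -1, -1],
                 ![1, 1, -1, 1, -1, -1, -1, -1, 1],
                 ![1, -1, 1, -1, 1, 1, 1, 1, -1],
                 ![1, 1, -1, -1, 1, -1, 1, 1, -1],
                 ![1, -1, 1, 1, -1, 1, -1, -1, 1],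
                 ![1, 1, -1, -1, 1, -1, -1, 1, -1],
                 ![1, -1, 1, 1, -1, 1, 1, -1, 1]] : Fin 8 → Fin 9 → ℝ) ℓ i * a i|
          ≤ Real.sqrt (∑ i, a i ^ 2))).card := by
  set r := √(∑ i, a i ^ 2)
  set x := Fin.tail a
  set p := a 0
  have hx : Antitone x := fun i j hij => hdec _ _ (Fin.succ_le_succ_iff.2 hij)
  have hp : x 0 ≤ p := hdec 0 1 (by decide)
  have hq : p ^ 2 + x ⬝ᵥ x ≤ r ^ 2 := by
    rw [Real.sq_sqrt (by positivity), Fin.sum_univ_succ]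
    simp [dotProduct, sq, x, p, Fin.tail]
  have hxx : 0 ≤ x ⬝ᵥ x := Finset.sum_nonneg fun i _ => mul_self_nonneg (x i)
  have hpr : p ≤ r := (sq_le_sq₀ (hpos 0) (Real.sqrt_nonneg _)).1 (by linarith)
  obtain ⟨b₁, b₂, b₃⟩ :=
    abs_ε_dotProduct_le hx (hpos 8) hp (Real.sqrt_nonneg _) (by linarith [sq_nonneg p])
  have h := four_le_card_of_pairs {ℓ | |![p + ∑ i, x i, p - ∑ i, x i, p + ε₁ ⬝ᵥ x,
      p - ε₁ ⬝ᵥ x, p + ε₂ ⬝ᵥ x, p - ε₂ ⬝ᵥ x, p + ε₃ ⬝ᵥ x, p - ε₃ ⬝ᵥ x] ℓ| ≤ r}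
  simp only [mem_filter, mem_univ, true_and, Matrix.cons_val] at h
  convert h (abs_add_le_or_abs_sub_le hpr b₁) (abs_add_le_or_abs_sub_le hpr b₂)
    (abs_add_le_or_abs_sub_le hpr b₃) ?_ using 4 with ℓ
  · fin_cases ℓ <;> simp [Fin.sum_univ_succ, dotProduct, ε₁, ε₂, ε₃, x, p, Fin.tail] <;> ring_nf
  · rcases abs_sub_sum_le_or_add_abs_ε_dotProduct_le hx (hpos 8) hp hpr hq with h | h | h | h
    · exact Or.inl h
    · exact Or.inr (Or.inl (abs_add_le_and_abs_sub_le (hpos 0) h))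
    · exact Or.inr (Or.inr (Or.inl (abs_add_le_and_abs_sub_le (hpos 0) h)))
    · exact Or.inr (Or.inr (Or.inr (abs_add_le_and_abs_sub_le (hpos 0) h)))
end
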